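/- Let (Q,+) be a commutative diassociative loop. Then the set QEnd(Q,+) of all quasicentral endomorphisms of (Q,+) is an associative ring with unity, with pointwise addition, pointwise negation, the zero endomorphism as zero, composition as multiplication, and the identity map of Q as unity. -/
import Mathlib


/- Preamble: diassociative loops, written additively.
   A loop is a set with `+`, a neutral element `0`, and unique left/right
   solvability.  Diassociativity is stated as: the subloop generated by any
   two elements (closure under `+`, negation and both divisions) is
   associative; in particular every element has a two-sided inverse `-x`
   (included as part of the structure, as it is uniquely determined). -/

universe u

section Preamble
variable {Q : Type u}

/-- Membership in the subloop of `Q` generated by the pair `a, b`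
    (closure under `0`, negation, addition and both divisions). -/
inductive GenBy [Add Q] [Zero Q] [Neg Q] (a b : Q) : Q → Prop
  | base_left : GenBy a b a
  | base_right : GenBy a b b
  | zero : GenBy a b 0
  | neg : ∀ x, GenBy a b x → GenBy a b (-x)
  | add : ∀ x y, GenBy a b x → GenBy a b y → GenBy a b (x + y)
  | ldiv : ∀ x y z, GenBy a b x → GenBy a b y → x + z = y → GenBy a b z
  | rdiv : ∀ x y z, GenBy a b x → GenBy a b y → z + x = y → GenBy a b z

/-- A diassociative loop `(Q,+)`: a loop in which the subloop generated by
    any pair of elements is a group (stated as associativity on that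
    subloop); every element has a two-sided inverse `-x`. -/
class DiassocLoop (Q : Type u) extends Add Q, Zero Q, Neg Q where
  zero_add : ∀ x : Q, 0 + x = x
  add_zero : ∀ x : Q, x + 0 = x
  exu_left : ∀ a b : Q, ∃! x : Q, a + x = b
  exu_right : ∀ a b : Q, ∃! y : Q, y + a = b
  neg_add_cancel : ∀ x : Q, -x + x = 0
  add_neg_cancel : ∀ x : Q, x + -x = 0
  diassoc : ∀ a b x y z : Q, GenBy a b x → GenBy a b y → GenBy a b z →
      (x + y) + z = x + (y + z)

variable [Add Q] [Zero Q] [Neg Q]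

/-- Natural multiple `n • x = x + (x + (⋯ + 0))`. -/
def nsmulL : ℕ → Q → Q
  | 0, _ => 0
  | n + 1, x => x + nsmulL n x

/-- Integer multiple `m • x` (unambiguous by diassociativity). -/
def zsmulL : ℤ → Q → Q
  | Int.ofNat n, x => nsmulL n x
  | Int.negSucc n, x => -(nsmulL (n + 1) x)

/-- `a` belongs to the nucleus `N(Q,+)`. -/
def inNucleus (a : Q) : Prop :=
  ∀ x y : Q, (a + x) + y = a + (x + y) ∧ (x + a) + y = x + (a + y) ∧
    (x + y) + a = x + (y + a)

/-- `a` belongs to the Moufang center `K(Q,+)`. -/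
def inMoufangCenter (a : Q) : Prop :=
  ∀ x y : Q, (a + a) + (x + y) = (a + x) + (a + y)

/-- `a` belongs to the center `Z(Q,+) = N(Q,+) ∩ K(Q,+)`. -/
def inCenter (a : Q) : Prop := inNucleus a ∧ inMoufangCenter a

/-- `f` is an endomorphism of `(Q,+)`. -/
def IsEndo (f : Q → Q) : Prop := ∀ x y : Q, f (x + y) = f x + f y

/-- `f` is a central endomorphism of `(Q,+)`: an endomorphism with
    `f(Q) ⊆ Z(Q,+)`. -/
def IsCentralEndo (f : Q → Q) : Prop := IsEndo f ∧ ∀ x : Q, inCenter (f x)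

/-- `f` is an `m`-quasicentral endomorphism of `(Q,+)`:
    `m•x + f(x) ∈ Z(Q,+)` for all `x`. -/
def IsQuasicentral (m : ℤ) (f : Q → Q) : Prop :=
  IsEndo f ∧ ∀ x : Q, inCenter (zsmulL m x + f x)

end Preamble

/- In a commutative loop the center is the set of elements `a` satisfying the
   nucleus (associativity) conditions, i.e. `inNucleus a`. -/

/-- `f` is an `m`-quasicentral endomorphism of the commutative loop `(Q,+)`. -/
def IsQuasicentralC {Q : Type u} [Add Q] [Zero Q] [Neg Q] (m : ℤ) (f : Q → Q) : Prop :=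
  IsEndo f ∧ ∀ x : Q, inNucleus (zsmulL m x + f x)


/- ===== Auxiliary development ===== -/

section Aux
variable {Q : Type u} [DiassocLoop Q]

lemma dl_left_cancel {a x y : Q} (h : a + x = a + y) : x = y := by
  obtain ⟨z, _, hu⟩ := DiassocLoop.exu_left a (a + y)
  rw [hu x h, hu y rfl]

lemma dl_neg_uniq {a b : Q} (h : a + b = 0) : b = -a :=
  dl_left_cancel (a := a) (by rw [h, DiassocLoop.add_neg_cancel])

lemma dl_neg_neg (x : Q) : -(-x) = x :=
  (dl_neg_uniq (DiassocLoop.neg_add_cancel x)).symm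

/-- Derive full nucleus membership from the left condition, using commutativity. -/
lemma nuc_of_left (hcomm : ∀ x y : Q, x + y = y + x) {a : Q}
    (h : ∀ x y : Q, (a + x) + y = a + (x + y)) : inNucleus a := by
  intro x y
  refine ⟨h x y, ?_, ?_⟩
  · calc (x + a) + y = (a + x) + y := by rw [hcomm x a]
      _ = a + (x + y) := h x y
      _ = a + (y + x) := by rw [hcomm x y]
      _ = (a + y) + x := (h y x).symm
      _ = x + (a + y) := hcomm _ _
  · calc (x + y) + a = a + (x + y) := hcomm _ _
      _ = a + (y + x) := by rw [hcomm x y]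
      _ = (a + y) + x := (h y x).symm
      _ = x + (a + y) := hcomm _ _
      _ = x + (y + a) := by rw [hcomm a y]

lemma nuc_zero (hcomm : ∀ x y : Q, x + y = y + x) : inNucleus (0 : Q) := by
  refine nuc_of_left hcomm fun x y => ?_
  rw [DiassocLoop.zero_add, DiassocLoop.zero_add]

lemma nuc_add (hcomm : ∀ x y : Q, x + y = y + x) {a b : Q}
    (ha : inNucleus a) (hb : inNucleus b) : inNucleus (a + b) := by
  refine nuc_of_left hcomm fun x y => ?_
  calc ((a + b) + x) + y = (a + (b + x)) + y := by rw [(ha b x).1]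
    _ = a + ((b + x) + y) := (ha (b + x) y).1
    _ = a + (b + (x + y)) := by rw [(hb x y).1]
    _ = (a + b) + (x + y) := ((ha b (x + y)).1).symm

lemma nuc_neg (hcomm : ∀ x y : Q, x + y = y + x) {a : Q}
    (ha : inNucleus a) : inNucleus (-a) := by
  refine nuc_of_left hcomm fun x y => ?_
  apply dl_left_cancel (a := a)
  calc a + ((-a + x) + y) = (a + (-a + x)) + y := ((ha (-a + x) y).1).symm
    _ = ((a + -a) + x) + y := by rw [(ha (-a) x).1]
    _ = x + y := by rw [DiassocLoop.add_neg_cancel, DiassocLoop.zero_add]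
    _ = (a + -a) + (x + y) := by rw [DiassocLoop.add_neg_cancel, DiassocLoop.zero_add]
    _ = a + (-a + (x + y)) := (ha (-a) (x + y)).1

lemma nuc_nsmul (hcomm : ∀ x y : Q, x + y = y + x) {a : Q}
    (ha : inNucleus a) (n : ℕ) : inNucleus (nsmulL n a) := by
  induction n with
  | zero => exact nuc_zero hcomm
  | succ k ih => exact nuc_add hcomm ha ih

lemma nuc_zsmul (hcomm : ∀ x y : Q, x + y = y + x) {a : Q}
    (ha : inNucleus a) (m : ℤ) : inNucleus (zsmulL m a) := by
  cases m with
  | ofNat n => exact nuc_nsmul hcomm ha n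
  | negSucc n => exact nuc_neg hcomm (nuc_nsmul hcomm ha (n + 1))

/-- Central elements slide: `(a+c)+(b+d) = (a+b)+(c+d)` for nucleus `c, d`. -/
lemma nuc_slide (hcomm : ∀ x y : Q, x + y = y + x) {c d : Q}
    (hc : inNucleus c) (hd : inNucleus d) (a b : Q) :
    (a + c) + (b + d) = (a + b) + (c + d) := by
  calc (a + c) + (b + d) = a + (c + (b + d)) := (hc a (b + d)).2.1
    _ = a + ((c + b) + d) := by rw [(hc b d).1]
    _ = a + ((b + c) + d) := by rw [hcomm c b]
    _ = a + (b + (c + d)) := by rw [(hc b d).2.1]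
    _ = (a + b) + (c + d) := ((nuc_add hcomm hc hd) a b).2.2.symm

lemma nuc_cancel₁ (hcomm : ∀ x y : Q, x + y = y + x) {e : Q}
    (he : inNucleus e) (P : Q) : P + (-P + e) = e := by
  rw [← (he P (-P)).2.2, DiassocLoop.add_neg_cancel, DiassocLoop.zero_add]

lemma nuc_cancel₂ (hcomm : ∀ x y : Q, x + y = y + x) {e : Q}
    (he : inNucleus e) (P : Q) : -P + (P + e) = e := by
  rw [← (he (-P) P).2.2, DiassocLoop.neg_add_cancel, DiassocLoop.zero_add]

lemma nuc_rearr4 (hcomm : ∀ x y : Q, x + y = y + x) {p q r : Q} (s : Q)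
    (hp : inNucleus p) (hq : inNucleus q) (hr : inNucleus r) :
    (p + q) + (r + s) = (p + r) + (q + s) := by
  calc (p + q) + (r + s) = p + (q + (r + s)) := (hp q (r + s)).1
    _ = p + ((q + r) + s) := by rw [(hq r s).1]
    _ = p + ((r + q) + s) := by rw [hcomm q r]
    _ = p + (r + (q + s)) := by rw [(hr q s).1]
    _ = (p + r) + (q + s) := ((hp r (q + s)).1).symm

/- Closure of `GenBy` under multiples. -/
lemma GenBy.nsmulL_mem {a b z : Q} (h : GenBy a b z) (n : ℕ) :
    GenBy a b (nsmulL n z) := by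
  induction n with
  | zero => exact GenBy.zero
  | succ k ih => exact GenBy.add _ _ h ih

lemma GenBy.zsmulL_mem {a b z : Q} (h : GenBy a b z) (m : ℤ) :
    GenBy a b (zsmulL m z) := by
  cases m with
  | ofNat n => exact h.nsmulL_mem n
  | negSucc n => exact GenBy.neg _ (h.nsmulL_mem (n + 1))

/-- The subloop generated by `a, b` is a commutative group. -/
def genGroup (hcomm : ∀ x y : Q, x + y = y + x) (a b : Q) :
    AddCommGroup {z : Q // GenBy a b z} where
  add p q := ⟨p.1 + q.1, GenBy.add _ _ p.2 q.2⟩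
  zero := ⟨0, GenBy.zero⟩
  neg p := ⟨-p.1, GenBy.neg _ p.2⟩
  add_assoc p q r := Subtype.ext (DiassocLoop.diassoc a b _ _ _ p.2 q.2 r.2)
  zero_add p := Subtype.ext (DiassocLoop.zero_add p.1)
  add_zero p := Subtype.ext (DiassocLoop.add_zero p.1)
  add_comm p q := Subtype.ext (hcomm p.1 q.1)
  neg_add_cancel p := Subtype.ext (DiassocLoop.neg_add_cancel p.1)
  nsmul n p := ⟨nsmulL n p.1, p.2.nsmulL_mem n⟩
  nsmul_zero p := rfl
  nsmul_succ n p := Subtype.ext (hcomm p.1 (nsmulL n p.1))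
  zsmul m p := ⟨zsmulL m p.1, p.2.zsmulL_mem m⟩
  zsmul_zero' p := rfl
  zsmul_succ' n p := Subtype.ext (hcomm p.1 (nsmulL n p.1))
  zsmul_neg' n p := rfl

lemma dl_zsmul_add (hcomm : ∀ x y : Q, x + y = y + x) (m : ℤ) (x y : Q) :
    zsmulL m (x + y) = zsmulL m x + zsmulL m y := by
  letI := genGroup hcomm x y
  exact congrArg Subtype.val
    (zsmul_add (⟨x, .base_left⟩ : {z : Q // GenBy x y z}) ⟨y, .base_right⟩ m)

lemma dl_add_zsmul (hcomm : ∀ x y : Q, x + y = y + x) (m n : ℤ) (x : Q) :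
    zsmulL (m + n) x = zsmulL m x + zsmulL n x := by
  letI := genGroup hcomm x x
  exact congrArg Subtype.val
    (add_zsmul (⟨x, .base_left⟩ : {z : Q // GenBy x x z}) m n)

lemma dl_neg_zsmul (hcomm : ∀ x y : Q, x + y = y + x) (m : ℤ) (x : Q) : zsmulL (-m) x = -(zsmulL m x) := by
  letI := genGroup hcomm x x
  exact congrArg Subtype.val
    (neg_zsmul (⟨x, .base_left⟩ : {z : Q // GenBy x x z}) m)

lemma dl_zsmul_neg (hcomm : ∀ x y : Q, x + y = y + x) (m : ℤ) (x : Q) : zsmulL m (-x) = -(zsmulL m x) := by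
  letI := genGroup hcomm x x
  exact congrArg Subtype.val
    (zsmul_neg (⟨x, .base_left⟩ : {z : Q // GenBy x x z}) m)

lemma dl_zsmul_zsmul (hcomm : ∀ x y : Q, x + y = y + x) (m n : ℤ) (x : Q) :
    zsmulL m (zsmulL n x) = zsmulL (m * n) x := by
  letI := genGroup hcomm x x
  exact (congrArg Subtype.val
    (mul_zsmul (⟨x, .base_left⟩ : {z : Q // GenBy x x z}) m n)).symm

lemma dl_neg_add (hcomm : ∀ x y : Q, x + y = y + x) (x y : Q) : -(x + y) = -x + -y := by
  letI := genGroup hcomm x y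
  exact congrArg Subtype.val
    (neg_add (⟨x, .base_left⟩ : {z : Q // GenBy x y z}) ⟨y, .base_right⟩)

lemma dl_rearr4 (hcomm : ∀ x y : Q, x + y = y + x) {a b p q r s : Q} (hp : GenBy a b p) (hq : GenBy a b q)
    (hr : GenBy a b r) (hs : GenBy a b s) :
    (p + q) + (r + s) = (p + r) + (q + s) := by
  letI := genGroup hcomm a b
  exact congrArg Subtype.val
    (add_add_add_comm (⟨p, hp⟩ : {z : Q // GenBy a b z}) ⟨q, hq⟩ ⟨r, hr⟩ ⟨s, hs⟩)

/- Endomorphism lemmas. -/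
lemma endo_zero {f : Q → Q} (hf : IsEndo f) : f 0 = 0 := by
  have h := hf 0 0
  rw [DiassocLoop.zero_add] at h
  have h2 : f 0 + 0 = f 0 + f 0 := by rw [DiassocLoop.add_zero, ← h]
  exact (dl_left_cancel h2).symm

lemma endo_neg {f : Q → Q} (hf : IsEndo f) (x : Q) : f (-x) = -(f x) := by
  have h := hf x (-x)
  rw [DiassocLoop.add_neg_cancel, endo_zero hf] at h
  exact dl_neg_uniq h.symm

lemma endo_nsmul {f : Q → Q} (hf : IsEndo f) (n : ℕ) (x : Q) :
    f (nsmulL n x) = nsmulL n (f x) := by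
  induction n with
  | zero => exact endo_zero hf
  | succ k ih => show f (x + nsmulL k x) = f x + nsmulL k (f x); rw [hf, ih]

lemma endo_zsmul {f : Q → Q} (hf : IsEndo f) (m : ℤ) (x : Q) :
    f (zsmulL m x) = zsmulL m (f x) := by
  cases m with
  | ofNat n => exact endo_nsmul hf n x
  | negSucc n =>
      show f (-(nsmulL (n+1) x)) = -(nsmulL (n+1) (f x))
      rw [endo_neg hf, endo_nsmul hf]

/- Quasicentral structure. -/
lemma qc_repr {f : Q → Q} {m : ℤ} (hf : IsQuasicentralC m f) (x : Q) :
    f x = -(zsmulL m x) + (zsmulL m x + f x) := by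
  have hM : GenBy x (f x) (zsmulL m x) := GenBy.zsmulL_mem .base_left m
  have h := DiassocLoop.diassoc x (f x) _ _ _ (GenBy.neg _ hM) hM
    (GenBy.base_right)
  rw [← h, DiassocLoop.neg_add_cancel, DiassocLoop.zero_add]

lemma qc_map_nuc (hcomm : ∀ x y : Q, x + y = y + x) {f : Q → Q} {m : ℤ}
    (hf : IsQuasicentralC m f) {z : Q} (hz : inNucleus z) : inNucleus (f z) := by
  rw [qc_repr hf z]
  exact nuc_add hcomm (nuc_neg hcomm (nuc_zsmul hcomm hz m)) (hf.2 z)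

/- Closure of quasicentral endomorphisms under the ring operations. -/

lemma qc_add (hcomm : ∀ x y : Q, x + y = y + x) {f g : Q → Q} {m n : ℤ}
    (hf : IsQuasicentralC m f) (hg : IsQuasicentralC n g) :
    IsQuasicentralC (m + n) (fun x => f x + g x) := by
  constructor
  · intro x y
    show f (x + y) + g (x + y) = (f x + g x) + (f y + g y)
    rw [hf.1 x y, hg.1 x y]
    -- (f x + f y) + (g x + g y) = (f x + g x) + (f y + g y)
    have rf : ∀ z : Q, f z = -(zsmulL m z) + (zsmulL m z + f z) := qc_repr hf
    have rg : ∀ z : Q, g z = -(zsmulL n z) + (zsmulL n z + g z) := qc_repr hg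
    set cx := zsmulL m x + f x with hcx
    set cy := zsmulL m y + f y with hcy
    set dx := zsmulL n x + g x with hdx
    set dy := zsmulL n y + g y with hdy
    have ncx : inNucleus cx := hf.2 x
    have ncy : inNucleus cy := hf.2 y
    have ndx : inNucleus dx := hg.2 x
    have ndy : inNucleus dy := hg.2 y
    have hMx : GenBy x y (-(zsmulL m x)) := GenBy.neg _ (GenBy.zsmulL_mem .base_left m)
    have hMy : GenBy x y (-(zsmulL m y)) := GenBy.neg _ (GenBy.zsmulL_mem .base_right m)
    have hNx : GenBy x y (-(zsmulL n x)) := GenBy.neg _ (GenBy.zsmulL_mem .base_left n)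
    have hNy : GenBy x y (-(zsmulL n y)) := GenBy.neg _ (GenBy.zsmulL_mem .base_right n)
    rw [rf x, rf y, rg x, rg y, ← hcx, ← hcy, ← hdx, ← hdy]
    rw [nuc_slide hcomm ncx ncy, nuc_slide hcomm ndx ndy,
        nuc_slide hcomm ncx ndx, nuc_slide hcomm ncy ndy]
    rw [nuc_slide hcomm (nuc_add hcomm ncx ncy) (nuc_add hcomm ndx ndy),
        nuc_slide hcomm (nuc_add hcomm ncx ndx) (nuc_add hcomm ncy ndy)]
    rw [dl_rearr4 hcomm hMx hMy hNx hNy,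
        nuc_rearr4 hcomm dy ncx ncy ndx]
  · intro x
    show inNucleus (zsmulL (m + n) x + (f x + g x))
    set cx := zsmulL m x + f x with hcx
    set dx := zsmulL n x + g x with hdx
    have ncx : inNucleus cx := hf.2 x
    have ndx : inNucleus dx := hg.2 x
    have key : f x + g x = -(zsmulL (m + n) x) + (cx + dx) := by
      rw [qc_repr hf x, qc_repr hg x, ← hcx, ← hdx]
      rw [nuc_slide hcomm ncx ndx]
      rw [← dl_neg_add hcomm, ← dl_add_zsmul hcomm]
    rw [key, nuc_cancel₁ hcomm (nuc_add hcomm ncx ndx)]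
    exact nuc_add hcomm ncx ndx

lemma qc_neg (hcomm : ∀ x y : Q, x + y = y + x) {f : Q → Q} {m : ℤ}
    (hf : IsQuasicentralC m f) :
    IsQuasicentralC (-m) (fun x => -(f x)) := by
  constructor
  · intro x y
    show -(f (x + y)) = -(f x) + -(f y)
    rw [hf.1 x y, dl_neg_add hcomm]
  · intro x
    show inNucleus (zsmulL (-m) x + -(f x))
    rw [dl_neg_zsmul hcomm, ← dl_neg_add hcomm]
    exact nuc_neg hcomm (hf.2 x)

lemma qc_comp (hcomm : ∀ x y : Q, x + y = y + x) {f g : Q → Q} {m n : ℤ}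
    (hf : IsQuasicentralC m f) (hg : IsQuasicentralC n g) :
    IsQuasicentralC (-(n * m)) (f ∘ g) := by
  constructor
  · intro x y
    show f (g (x + y)) = f (g x) + f (g y)
    rw [hg.1 x y, hf.1]
  · intro x
    show inNucleus (zsmulL (-(n * m)) x + f (g x))
    set cf := zsmulL m x + f x with hcf
    set cg := zsmulL n x + g x with hcg
    have ncf : inNucleus cf := hf.2 x
    have ncg : inNucleus cg := hg.2 x
    have hu : inNucleus (zsmulL n cf) := nuc_zsmul hcomm ncf n
    have hv : inNucleus (f cg) := qc_map_nuc hcomm hf ncg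
    have h1 : zsmulL n (f x) = -(zsmulL (n * m) x) + zsmulL n cf := by
      rw [qc_repr hf x, ← hcf, dl_zsmul_add hcomm, dl_zsmul_neg hcomm,
          dl_zsmul_zsmul hcomm]
    have h2 : f (g x) = zsmulL (n * m) x + (-(zsmulL n cf) + f cg) := by
      have : f (g x) = -(zsmulL n (f x)) + f cg := by
        conv_lhs => rw [qc_repr hg x, ← hcg]
        rw [hf.1, endo_neg hf.1, endo_zsmul hf.1]
      rw [this, h1, dl_neg_add hcomm, dl_neg_neg]
      exact ((nuc_neg hcomm hu) (zsmulL (n * m) x) (f cg)).2.1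
    rw [h2, dl_neg_zsmul hcomm,
        nuc_cancel₂ hcomm (nuc_add hcomm (nuc_neg hcomm hu) hv)]
    exact nuc_add hcomm (nuc_neg hcomm hu) hv

lemma qc_zero (hcomm : ∀ x y : Q, x + y = y + x) :
    IsQuasicentralC 0 (fun _ : Q => (0 : Q)) := by
  constructor
  · intro x y; exact (DiassocLoop.zero_add (0 : Q)).symm
  · intro x
    show inNucleus (zsmulL 0 x + 0)
    have : zsmulL 0 x + (0 : Q) = 0 := DiassocLoop.add_zero _
    rw [this]
    exact nuc_zero hcomm

lemma qc_one (hcomm : ∀ x y : Q, x + y = y + x) :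
    IsQuasicentralC (-1) (id : Q → Q) := by
  constructor
  · intro x y; rfl
  · intro x
    show inNucleus (zsmulL (-1) x + x)
    have h1 : zsmulL (-1) x = -x := by
      show -(nsmulL 1 x) = -x
      show -(x + nsmulL 0 x) = -x
      rw [show nsmulL 0 x = (0:Q) from rfl, DiassocLoop.add_zero]
    rw [h1, DiassocLoop.neg_add_cancel]
    exact nuc_zero hcomm

/-- Pointwise associativity of quasicentral values. -/
lemma qc_assoc3 (hcomm : ∀ x y : Q, x + y = y + x) {f g h : Q → Q} {m n p : ℤ}
    (hf : IsQuasicentralC m f) (hg : IsQuasicentralC n g)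
    (hh : IsQuasicentralC p h) (x : Q) :
    (f x + g x) + h x = f x + (g x + h x) := by
  set c := zsmulL m x + f x with hc
  set d := zsmulL n x + g x with hd
  set e := zsmulL p x + h x with he
  have nc : inNucleus c := hf.2 x
  have nd : inNucleus d := hg.2 x
  have ne' : inNucleus e := hh.2 x
  have hM : GenBy x x (-(zsmulL m x)) := GenBy.neg _ (GenBy.zsmulL_mem .base_left m)
  have hN : GenBy x x (-(zsmulL n x)) := GenBy.neg _ (GenBy.zsmulL_mem .base_left n)
  have hP : GenBy x x (-(zsmulL p x)) := GenBy.neg _ (GenBy.zsmulL_mem .base_left p)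
  rw [qc_repr hf x, qc_repr hg x, qc_repr hh x, ← hc, ← hd, ← he]
  rw [nuc_slide hcomm nc nd, nuc_slide hcomm (nuc_add hcomm nc nd) ne',
      nuc_slide hcomm nd ne', nuc_slide hcomm nc (nuc_add hcomm nd ne')]
  rw [DiassocLoop.diassoc x x _ _ _ hM hN hP, (nc _ _).1]

end Aux

/- STATEMENT 5: Corollary 2.7.  For a commutative diassociative loop `(Q,+)`,
   the set `QEnd(Q,+)` of quasicentral endomorphisms is an associative ring
   with unity, under pointwise addition, pointwise negation, the zero
   endomorphism as zero, composition as multiplication, and the identity map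
   as unity. -/
theorem quasicentralEnd_ring {Q : Type u} [DiassocLoop Q]
    (hcomm : ∀ x y : Q, x + y = y + x) :
    ∃ inst : Ring {f : Q → Q // ∃ m : ℤ, IsQuasicentralC m f},
      (∀ F G : {f : Q → Q // ∃ m : ℤ, IsQuasicentralC m f},
        (inst.add F G).1 = fun x : Q => F.1 x + G.1 x) ∧
      (∀ F : {f : Q → Q // ∃ m : ℤ, IsQuasicentralC m f},
        (inst.neg F).1 = fun x : Q => -(F.1 x)) ∧
      ((inst.zero.1 : Q → Q) = fun _ : Q => (0 : Q)) ∧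
      (∀ F G : {f : Q → Q // ∃ m : ℤ, IsQuasicentralC m f},
        (inst.mul F G).1 = F.1 ∘ G.1) ∧
      ((inst.one.1 : Q → Q) = id) := by
  classical
  letI addI : Add {f : Q → Q // ∃ m : ℤ, IsQuasicentralC m f} :=
    ⟨fun F G => ⟨fun x => F.1 x + G.1 x, by
        obtain ⟨m, hf⟩ := F.2; obtain ⟨n, hg⟩ := G.2
        exact ⟨m + n, qc_add hcomm hf hg⟩⟩⟩
  letI negI : Neg {f : Q → Q // ∃ m : ℤ, IsQuasicentralC m f} :=
    ⟨fun F => ⟨fun x => -(F.1 x), by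
        obtain ⟨m, hf⟩ := F.2
        exact ⟨-m, qc_neg hcomm hf⟩⟩⟩
  letI zeroI : Zero {f : Q → Q // ∃ m : ℤ, IsQuasicentralC m f} :=
    ⟨⟨fun _ => 0, 0, qc_zero hcomm⟩⟩
  refine ⟨{
      add := addI.add
      neg := negI.neg
      zero := zeroI.zero
      nsmul := nsmulRec
      zsmul := zsmulRec
      mul := fun F G => ⟨F.1 ∘ G.1, by
        obtain ⟨m, hf⟩ := F.2; obtain ⟨n, hg⟩ := G.2
        exact ⟨-(n * m), qc_comp hcomm hf hg⟩⟩
      one := ⟨id, -1, qc_one hcomm⟩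
      add_assoc := fun F G H => by
        apply Subtype.ext; funext x
        obtain ⟨m, hf⟩ := F.2; obtain ⟨n, hg⟩ := G.2; obtain ⟨p, hh⟩ := H.2
        exact qc_assoc3 hcomm hf hg hh x
      zero_add := fun F => by
        apply Subtype.ext; funext x; exact DiassocLoop.zero_add _
      add_zero := fun F => by
        apply Subtype.ext; funext x; exact DiassocLoop.add_zero _
      add_comm := fun F G => by
        apply Subtype.ext; funext x; exact hcomm _ _
      neg_add_cancel := fun F => by
        apply Subtype.ext; funext x; exact DiassocLoop.neg_add_cancel _
      left_distrib := fun F G H => by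
        apply Subtype.ext; funext x
        obtain ⟨m, hf⟩ := F.2
        exact hf.1 _ _
      right_distrib := fun F G H => by
        apply Subtype.ext; funext x; rfl
      zero_mul := fun F => by
        apply Subtype.ext; funext x; rfl
      mul_zero := fun F => by
        apply Subtype.ext; funext x
        obtain ⟨m, hf⟩ := F.2
        exact endo_zero hf.1
      mul_assoc := fun F G H => by
        apply Subtype.ext; rfl
      one_mul := fun F => by
        apply Subtype.ext; rfl
      mul_one := fun F => by
        apply Subtype.ext; rfl }, ?_, ?_, ?_, ?_, ?_⟩
  · intro F G; rfl
  · intro F; rfl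
  · rfl
  · intro F G; rfl
  · rfl
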